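/- arXiv:2203.13129 — 5 statements merged into one kernel-verified Lean document; each statement's English description precedes it below -/
import Mathlib

section
/- Let Λ be a compact metric space, E : ℝ^r × Λ → ℝ jointly continuous, and L : ℝ^r × Λ → ℝ jointly continuous such that for each λ ∈ Λ the function L(·, λ) has a unique global minimizer w_λ, and {w_λ : λ ∈ Λ} is bounded. Then the response function f(λ) = E(w_λ, λ) is continuous on Λ and attains a minimum on Λ. -/
/-!
A bounded family of unique minimizers lies in a compact set, and the graph of the argmin map
`λ ↦ w_λ` is closed because it is cut out by the closed conditions `L (w, λ) ≤ L (v, λ)`.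
A map into a compact set with closed graph is continuous, so `λ ↦ E (w_λ, λ)` is continuous
on the compact space `Λ` and attains its minimum.
-/

open Filter Topology

theorem continuous_of_isClosed_graph_of_isCompact {X Y : Type*} [TopologicalSpace X]
    [TopologicalSpace Y] {f : X → Y} {K : Set Y} (hK : IsCompact K) (hfK : ∀ x, f x ∈ K)
    (hgraph : IsClosed {p : X × Y | f p.1 = p.2}) : Continuous f := by
  refine continuous_iff_continuousAt.2 fun x => ?_
  refine hK.tendsto_nhds_of_unique_mapClusterPt (Eventually.of_forall hfK) fun y _ hy => ?_
  have hxy : MapClusterPt (x, y) (𝓝 x) fun x' => (x', f x') := by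
    rw [((𝓝 x).basis_sets.prod_nhds (𝓝 y).basis_sets).mapClusterPt_iff_frequently]
    rintro ⟨s, t⟩ ⟨hs, ht⟩
    exact ((mapClusterPt_iff_frequently.1 hy t ht).and_eventually hs).mono
      fun x' hx' => ⟨hx'.2, hx'.1⟩
  exact (hgraph.mem_of_mapClusterPt hxy (Eventually.of_forall fun _ => rfl)).symm

theorem isClosed_setOf_isMinimizer {X W β : Type*} [TopologicalSpace X] [TopologicalSpace W]
    [TopologicalSpace β] [Preorder β] [OrderClosedTopology β] {L : W × X → β}
    (hL : Continuous L) :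
    IsClosed {p : X × W | ∀ v, L (p.2, p.1) ≤ L (v, p.1)} := by
  rw [Set.ofPred_forall]
  exact isClosed_iInter fun v =>
    isClosed_le (hL.comp continuous_swap) (hL.comp (continuous_const.prodMk continuous_fst))

theorem continuous_of_unique_minimizer {X W β : Type*} [TopologicalSpace X]
    [TopologicalSpace W] [TopologicalSpace β] [Preorder β] [OrderClosedTopology β]
    {L : W × X → β} (hL : Continuous L) {w : X → W} {K : Set W} (hK : IsCompact K)
    (hwK : ∀ x, w x ∈ K) (hmin : ∀ x v, L (w x, x) ≤ L (v, x))
    (huniq : ∀ x u, (∀ v, L (u, x) ≤ L (v, x)) → u = w x) : Continuous w := by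
  have hgraph_eq :
      {p : X × W | w p.1 = p.2} = {p : X × W | ∀ v, L (p.2, p.1) ≤ L (v, p.1)} := by
    ext ⟨x, u⟩
    exact ⟨fun (h : w x = u) => h ▸ hmin x, fun h => (huniq x u h).symm⟩
  exact continuous_of_isClosed_graph_of_isCompact hK hwK
    (hgraph_eq ▸ isClosed_setOf_isMinimizer hL)

theorem stmt_1 {Λ : Type*} [MetricSpace Λ] [CompactSpace Λ] [Nonempty Λ] {r : ℕ}
    (E L : (Fin r → ℝ) × Λ → ℝ) (hE : Continuous E) (hL : Continuous L)
    (w : Λ → (Fin r → ℝ))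
    (hmin : ∀ lam : Λ, ∀ u : Fin r → ℝ, L (w lam, lam) ≤ L (u, lam))
    (huniq : ∀ lam : Λ, ∀ u : Fin r → ℝ,
      (∀ v : Fin r → ℝ, L (u, lam) ≤ L (v, lam)) → u = w lam)
    (hbdd : Bornology.IsBounded (Set.range w)) :
    Continuous (fun lam : Λ => E (w lam, lam)) ∧
      ∃ lamStar : Λ, ∀ lam : Λ, E (w lamStar, lamStar) ≤ E (w lam, lam) := by
  have hw : Continuous w :=
    continuous_of_unique_minimizer hL hbdd.isCompact_closure
      (fun lam => subset_closure (Set.mem_range_self lam)) hmin huniq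
  have hf : Continuous fun lam : Λ => E (w lam, lam) := hE.comp (hw.prodMk continuous_id)
  exact ⟨hf, hf.exists_forall_le' (Classical.arbitrary Λ) (by simp)⟩
end

section
/- Fix w^t ∈ ℝ^r with w^t_a > 0, x ∈ ℝ^m with x_j ≥ 0, H ∈ ℝ^{r×m} with H_{aj} ≥ 0 and Σ_b w^t_b H_{bj} > 0 for all j, and λ ≥ 0. Define α_{aj} = (w^t_a H_{aj}) / (Σ_b w^t_b H_{bj}) and G(w, w^t) = Σ_j Σ_a w_a H_{aj} − Σ_j Σ_a x_j α_{aj} (log(w_a H_{aj}) − log α_{aj}) + λ Σ_a w_a. Then for all w with w_a > 0: G(w, w^t) ≥ F(w), where F(w) = Σ_j (−x_j log(Σ_a w_a H_{aj}) + Σ_a w_a H_{aj}) + λ Σ_a w_a. -/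
/-!
For each column `j` the weights `α a j` are nonnegative and sum to one, and they vanish
wherever `w a * H a j` does. Gibbs' inequality `∑ p (log y - log p) ≤ log ∑ y`, a consequence
of `log t ≤ t - 1` applied to `t = y / (p ∑ y)`, then bounds the subtracted term of `G` by
`∑ j, x j * log (∑ a, w a * H a j)`, which is exactly the logarithmic part of `F`.
-/

open Finset Real

lemma mul_sub_log_le_sub {p y : ℝ} (hp : 0 < p) (hy : 0 < y) :
    p * (log y - log p) ≤ y - p := by
  calc p * (log y - log p) = p * log (y / p) := by rw [log_div hy.ne' hp.ne']
    _ ≤ p * (y / p - 1) := mul_le_mul_of_nonneg_left (log_le_sub_one_of_pos (div_pos hy hp)) hp.le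
    _ = y - p := by field_simp

theorem sum_mul_sub_log_le_log_sum {ι : Type*} {s : Finset ι} {p y : ι → ℝ}
    (hp : ∀ i ∈ s, 0 ≤ p i) (hp_sum : ∑ i ∈ s, p i = 1) (hy : ∀ i ∈ s, 0 ≤ y i)
    (hpy : ∀ i ∈ s, 0 < p i → 0 < y i) :
    ∑ i ∈ s, p i * (log (y i) - log (p i)) ≤ log (∑ i ∈ s, y i) := by
  obtain ⟨k, hk, hpk⟩ : ∃ k ∈ s, 0 < p k := by
    by_contra! h
    have := sum_nonpos h
    linarith
  set S := ∑ i ∈ s, y i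
  have hS : 0 < S := sum_pos' hy ⟨k, hk, hpy k hk hpk⟩
  -- Normalise `y` to `y / S`, which sums to one like `p`.
  have hterm : ∀ i ∈ s, p i * (log (y i) - log (p i)) ≤ y i / S - p i + p i * log S := by
    intro i hi
    rcases (hp i hi).eq_or_lt with hpi | hpi
    · rw [← hpi]
      simpa using div_nonneg (hy i hi) hS.le
    · have hyi := hpy i hi hpi
      have := mul_sub_log_le_sub hpi (div_pos hyi hS)
      rw [log_div hyi.ne' hS.ne'] at this
      linarith
  calc ∑ i ∈ s, p i * (log (y i) - log (p i))
      ≤ ∑ i ∈ s, (y i / S - p i + p i * log S) := sum_le_sum hterm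
    _ = log S := by
      rw [sum_add_distrib, sum_sub_distrib, ← sum_div, ← sum_mul, hp_sum, div_self hS.ne']
      ring

open Finset in
theorem stmt_7_general {r m : ℕ} (wt : Fin r → ℝ) (x : Fin m → ℝ) (H : Fin r → Fin m → ℝ)
    (lam : ℝ) (hwt : ∀ a, 0 < wt a) (hx : ∀ j, 0 ≤ x j) (hH : ∀ a j, 0 ≤ H a j)
    (hden : ∀ j, 0 < ∑ b, wt b * H b j)
    (α : Fin r → Fin m → ℝ)
    (hα : ∀ a j, α a j = wt a * H a j / ∑ b, wt b * H b j)
    (w : Fin r → ℝ) (hw : ∀ a, 0 < w a) :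
    (∑ j, (-(x j) * Real.log (∑ a, w a * H a j) + ∑ a, w a * H a j))
        + lam * ∑ a, w a
      ≤ (∑ j, ∑ a, w a * H a j)
        - (∑ j, ∑ a, x j * α a j * (Real.log (w a * H a j) - Real.log (α a j)))
        + lam * ∑ a, w a := by
  have hgibbs : ∀ j, ∑ a, α a j * (log (w a * H a j) - log (α a j))
      ≤ log (∑ a, w a * H a j) := by
    intro j
    refine sum_mul_sub_log_le_log_sum (fun a _ => ?_) ?_ (fun a _ => ?_) (fun a _ hαa => ?_)
    · rw [hα]
      exact div_nonneg (mul_nonneg (hwt a).le (hH a j)) (hden j).le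
    · simp only [hα, ← sum_div]
      exact div_self (hden j).ne'
    · exact mul_nonneg (hw a).le (hH a j)
    · refine mul_pos (hw a) ((hH a j).lt_of_ne' fun hH0 => hαa.ne' ?_)
      rw [hα, hH0, mul_zero, zero_div]
  have hsum : ∑ j, ∑ a, x j * α a j * (log (w a * H a j) - log (α a j))
      ≤ ∑ j, x j * log (∑ a, w a * H a j) := by
    refine sum_le_sum fun j _ => ?_
    simp only [mul_assoc, ← mul_sum]
    exact mul_le_mul_of_nonneg_left (hgibbs j) (hx j)
  simp only [sum_add_distrib, neg_mul, sum_neg_distrib]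
  linarith

open Finset in
theorem stmt_7 {r m : ℕ} (wt : Fin r → ℝ) (x : Fin m → ℝ) (H : Fin r → Fin m → ℝ)
    (lam : ℝ) (hwt : ∀ a, 0 < wt a) (hx : ∀ j, 0 ≤ x j) (hH : ∀ a j, 0 ≤ H a j)
    (hden : ∀ j, 0 < ∑ b, wt b * H b j) (hlam : 0 ≤ lam)
    (α : Fin r → Fin m → ℝ)
    (hα : ∀ a j, α a j = wt a * H a j / ∑ b, wt b * H b j)
    (w : Fin r → ℝ) (hw : ∀ a, 0 < w a) :
    (∑ j, (-(x j) * Real.log (∑ a, w a * H a j) + ∑ a, w a * H a j))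
        + lam * ∑ a, w a
      ≤ (∑ j, ∑ a, w a * H a j)
        - (∑ j, ∑ a, x j * α a j * (Real.log (w a * H a j) - Real.log (α a j)))
        + lam * ∑ a, w a :=
  stmt_7_general wt x H lam hwt hx hH hden α hα w hw
end

section
/- Under the assumptions of the auxiliary function lemma, the unique critical point of w ↦ G(w, w^t) on the positive orthant is given componentwise by w_a = w^t_a · (Σ_k H_{ak} x_k / (Σ_b w^t_b H_{bk})) / (Σ_k H_{ak} + λ), provided Σ_k H_{ak} + λ > 0 and the numerator is positive. -/
/-!
Pulling `w^t_a` out of the responsibilities gives `Σ_j x_j α_{aj} = w^t_a Σ_k H_{ak} x_k / Σ_b w^t_b H_{bk}`,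
so the `a`-th stationarity equation decouples into `s_a - N_a / w_a = 0` with `s_a = Σ_k H_{ak} + λ > 0`,
whose only nonzero solution is `w_a = N_a / s_a`.
-/

open Finset

lemma sub_div_add_eq_zero_iff {s l N w : ℝ} (hw : w ≠ 0) (hsl : s + l ≠ 0) :
    s - N / w + l = 0 ↔ w = N / (s + l) := by
  rw [eq_div_iff hsl, sub_add_eq_add_sub, sub_eq_zero, eq_div_iff hw, mul_comm]

lemma sum_mul_responsibility {ι κ : Type*} [Fintype ι] [Fintype κ]
    (wt : ι → ℝ) (x : κ → ℝ) (H : ι → κ → ℝ) (α : ι → κ → ℝ)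
    (hα : ∀ a j, α a j = wt a * H a j / ∑ b, wt b * H b j) (a : ι) :
    ∑ j, x j * α a j = wt a * ∑ k, H a k * x k / ∑ b, wt b * H b k := by
  rw [mul_sum]
  refine sum_congr rfl fun j _ => ?_
  rw [hα]
  ring

open Finset in
theorem stmt_10_general {r m : ℕ} (wt : Fin r → ℝ) (x : Fin m → ℝ) (H : Fin r → Fin m → ℝ)
    (lam : ℝ) (hwt : ∀ a, 0 < wt a)
    (α : Fin r → Fin m → ℝ)
    (hα : ∀ a j, α a j = wt a * H a j / ∑ b, wt b * H b j)
    (hpos : ∀ a, (0:ℝ) < ∑ k, H a k + lam)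
    (hnum : ∀ a, (0:ℝ) < ∑ k, H a k * x k / ∑ b, wt b * H b k)
    (wstar : Fin r → ℝ)
    (hstar : ∀ a, wstar a = wt a * (∑ k, H a k * x k / ∑ b, wt b * H b k)
        / (∑ k, H a k + lam)) :
    -- wstar is a critical point of w ↦ G(w, wt) on the positive orthant ...
    ((∀ a, 0 < wstar a) ∧
      (∀ a, (∑ j, H a j) - (∑ j, x j * α a j) / wstar a + lam = 0)) ∧
    -- ... and it is the unique such critical point
    (∀ w : Fin r → ℝ, (∀ a, 0 < w a) →
      (∀ a, (∑ j, H a j) - (∑ j, x j * α a j) / w a + lam = 0) → w = wstar) := by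
  simp_rw [sum_mul_responsibility wt x H α hα]
  have hstar_pos : ∀ a, 0 < wstar a := fun a => by
    rw [hstar]
    exact div_pos (mul_pos (hwt a) (hnum a)) (hpos a)
  refine ⟨⟨hstar_pos, fun a => ?_⟩, fun w hw hcrit => funext fun a => ?_⟩
  · exact (sub_div_add_eq_zero_iff (hstar_pos a).ne' (hpos a).ne').mpr (hstar a)
  · rw [hstar]
    exact (sub_div_add_eq_zero_iff (hw a).ne' (hpos a).ne').mp (hcrit a)

open Finset in
theorem stmt_10 {r m : ℕ} (wt : Fin r → ℝ) (x : Fin m → ℝ) (H : Fin r → Fin m → ℝ)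
    (lam : ℝ) (hwt : ∀ a, 0 < wt a) (hx : ∀ j, 0 ≤ x j) (hH : ∀ a j, 0 ≤ H a j)
    (hden : ∀ j, 0 < ∑ b, wt b * H b j) (hlam : 0 ≤ lam)
    (α : Fin r → Fin m → ℝ)
    (hα : ∀ a j, α a j = wt a * H a j / ∑ b, wt b * H b j)
    (hpos : ∀ a, (0:ℝ) < ∑ k, H a k + lam)
    (hnum : ∀ a, (0:ℝ) < ∑ k, H a k * x k / ∑ b, wt b * H b k)
    (wstar : Fin r → ℝ)
    (hstar : ∀ a, wstar a = wt a * (∑ k, H a k * x k / ∑ b, wt b * H b k)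
        / (∑ k, H a k + lam)) :
    -- wstar is a critical point of w ↦ G(w, wt) on the positive orthant ...
    ((∀ a, 0 < wstar a) ∧
      (∀ a, (∑ j, H a j) - (∑ j, x j * α a j) / wstar a + lam = 0)) ∧
    -- ... and it is the unique such critical point
    (∀ w : Fin r → ℝ, (∀ a, 0 < w a) →
      (∀ a, (∑ j, H a j) - (∑ j, x j * α a j) / w a + lam = 0) → w = wstar) :=
  stmt_10_general wt x H lam hwt α hα hpos hnum wstar hstar
end

section
/- The penalized KL-NMF objective F(w) = Σ_j (−x_j log(Σ_a w_a H_{aj}) + Σ_a w_a H_{aj}) + λ Σ_a w_a is non-increasing under the multiplicative update w_a ← w_a · (Σ_k H_{ak} x_k / (Σ_b w_b H_{bk})) / (Σ_k H_{ak} + λ): that is, if w' is defined by this update from w (with all relevant quantities positive), then F(w') ≤ F(w). -/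
/-!
Majorization–minimization. With the responsibilities `ρ a j = w a * H a j / ∑ b, w b * H b j`
(a probability vector in `a` for each `j`), concavity of `log` gives
`log (∑ a, v a * H a j) ≥ log (∑ b, w b * H b j) + ∑ a, ρ a j * (log (v a) - log (w a))`.
Substituting this into `F` yields an auxiliary function `G(v, w) ≥ F v` with `G(w, w) = F w`.
In `v`, `G(·, w)` separates into the convex terms `c a * v a - A a * log (v a)` with
`c a = ∑ k, H a k + lam` and `A a = ∑ j, x j * ρ a j`, minimized at `v a = A a / c a`, which is
the multiplicative update `w' a`. Hence `F w' ≤ G(w', w) ≤ G(w, w) = F w`.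
-/

open Finset Real

theorem Real.sum_mul_log_le_log_sum_mul {ι : Type*} {s : Finset ι} {p y : ι → ℝ}
    (hp : ∀ i ∈ s, 0 ≤ p i) (hp1 : ∑ i ∈ s, p i = 1) (hy : ∀ i ∈ s, 0 < p i → 0 < y i) :
    ∑ i ∈ s, p i * log (y i) ≤ log (∑ i ∈ s, p i * y i) := by
  set t := s.filter fun i => 0 < p i
  have hsupp (f : ι → ℝ) : ∑ i ∈ t, p i * f i = ∑ i ∈ s, p i * f i :=
    sum_filter_of_ne fun i hi h => (hp i hi).lt_of_ne' (left_ne_zero_of_mul h)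
  have ht1 : ∑ i ∈ t, p i = 1 := by simpa only [mul_one] using (hsupp fun _ => 1).trans (by simpa)
  have := strictConcaveOn_log_Ioi.concaveOn.le_map_sum (t := t) (w := p) (p := y)
    (fun i hi => (mem_filter.1 hi).2.le) ht1
    (fun i hi => hy i (mem_filter.1 hi).1 (mem_filter.1 hi).2)
  simpa only [smul_eq_mul, hsupp] using this

theorem Real.mul_sub_log_le_sub {s t : ℝ} (hs : 0 < s) (ht : 0 ≤ t) :
    t * (log s - log t) ≤ s - t := by
  rcases ht.eq_or_lt with rfl | ht
  · simpa using hs.le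
  · calc t * (log s - log t) = t * log (s / t) := by rw [log_div hs.ne' ht.ne']
      _ ≤ t * (s / t - 1) := by gcongr; exact log_le_sub_one_of_pos (by positivity)
      _ = s - t := by field_simp

namespace KLNMF

variable {ι κ : Type*} [Fintype ι] {H : ι → κ → ℝ} {w : ι → ℝ} {a : ι} {j : κ}

noncomputable def responsibility (H : ι → κ → ℝ) (w : ι → ℝ) (a : ι) (j : κ) : ℝ :=
  w a * H a j / ∑ b, w b * H b j

theorem sum_responsibility (hD : 0 < ∑ b, w b * H b j) : ∑ a, responsibility H w a j = 1 := by
  simp only [responsibility, ← sum_div, div_self hD.ne']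

theorem responsibility_nonneg (hw : ∀ a, 0 ≤ w a) (hH : ∀ a, 0 ≤ H a j) :
    0 ≤ responsibility H w a j :=
  div_nonneg (mul_nonneg (hw a) (hH a)) (sum_nonneg fun b _ => mul_nonneg (hw b) (hH b))

theorem log_add_sum_responsibility_mul_le (hw : ∀ a, 0 < w a) (hH : ∀ a, 0 ≤ H a j)
    (hD : 0 < ∑ b, w b * H b j) {v : ι → ℝ} (hv : ∀ a, 0 < H a j → 0 < v a) :
    log (∑ b, w b * H b j) + ∑ a, responsibility H w a j * (log (v a) - log (w a))
      ≤ log (∑ a, v a * H a j) := by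
  set D := ∑ b, w b * H b j
  have hlog (a : ι) : responsibility H w a j * log (v a * D / w a)
      = responsibility H w a j * log D + responsibility H w a j * (log (v a) - log (w a)) := by
    rcases (hH a).eq_or_lt with h0 | hpos
    · simp [responsibility, ← h0]
    · rw [log_div (by have := hv a hpos; positivity) (hw a).ne',
        log_mul (hv a hpos).ne' hD.ne']
      ring
  have hmass (a : ι) : responsibility H w a j * (v a * D / w a) = v a * H a j := by
    change w a * H a j / D * (v a * D / w a) = _
    field_simp [(hw a).ne', hD.ne']
  have := Real.sum_mul_log_le_log_sum_mul (s := univ) (p := (responsibility H w · j))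
    (y := fun a => v a * D / w a) (fun a _ => div_nonneg (mul_nonneg (hw a).le (hH a)) hD.le)
    (sum_responsibility hD) fun a _ h => by
      rcases (hH a).eq_or_lt with h0 | hpos
      · simp [responsibility, ← h0] at h
      · have := hv a hpos; have := hw a; positivity
  simpa only [hlog, hmass, sum_add_distrib, ← sum_mul, sum_responsibility hD, one_mul] using this

variable [Fintype κ] {x : κ → ℝ} {lam : ℝ}

noncomputable def objective (x : κ → ℝ) (H : ι → κ → ℝ) (lam : ℝ) (v : ι → ℝ) : ℝ :=
  (∑ j, (-(x j) * log (∑ a, v a * H a j) + ∑ a, v a * H a j)) + lam * ∑ a, v a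

/-- The paper's auxiliary function `G(v, w)`, with its `log (v a * D / w a)`, where
`D = ∑ b, w b * H b j`, expanded so that it stays linear in `log (v a)` when some `v a` vanish. -/
noncomputable def surrogate (x : κ → ℝ) (H : ι → κ → ℝ) (lam : ℝ) (w v : ι → ℝ) : ℝ :=
  (∑ j, (-(x j) * (log (∑ b, w b * H b j)
      + ∑ a, responsibility H w a j * (log (v a) - log (w a))) + ∑ a, v a * H a j))
    + lam * ∑ a, v a

noncomputable def update (x : κ → ℝ) (H : ι → κ → ℝ) (lam : ℝ) (w : ι → ℝ) (a : ι) : ℝ :=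
  w a * (∑ k, H a k * x k / ∑ b, w b * H b k) / (∑ k, H a k + lam)

theorem surrogate_self : surrogate x H lam w w = objective x H lam w := by
  simp [surrogate, objective]

theorem objective_le_surrogate (hx : ∀ j, 0 ≤ x j) (hH : ∀ a j, 0 ≤ H a j)
    (hw : ∀ a, 0 < w a) (hden : ∀ j, 0 < ∑ b, w b * H b j) {v : ι → ℝ}
    (hv : ∀ a j, 0 < x j → 0 < H a j → 0 < v a) :
    objective x H lam v ≤ surrogate x H lam w v := by
  refine add_le_add_left (sum_le_sum fun j _ => add_le_add_left ?_ _) _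
  rcases (hx j).eq_or_lt with h0 | hxj
  · simp [← h0]
  · have := mul_le_mul_of_nonneg_left
      (log_add_sum_responsibility_mul_le hw (hH · j) (hden j) (hv · j hxj)) hxj.le
    linarith

theorem sum_mul_responsibility_eq_mul_update (hpos : ∑ k, H a k + lam ≠ 0) :
    ∑ j, x j * responsibility H w a j = (∑ k, H a k + lam) * update x H lam w a := by
  simp only [responsibility, update, mul_div_cancel₀ _ hpos, mul_sum]
  exact sum_congr rfl fun j _ => by ring

theorem update_pos (hx : ∀ j, 0 ≤ x j) (hH : ∀ a j, 0 ≤ H a j) (hw : ∀ a, 0 < w a)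
    (hden : ∀ j, 0 < ∑ b, w b * H b j) (hpos : 0 < ∑ k, H a k + lam) (hxj : 0 < x j)
    (hHa : 0 < H a j) :
    0 < update x H lam w a := by
  refine (mul_pos_iff_of_pos_left hpos).1 ?_
  rw [← sum_mul_responsibility_eq_mul_update hpos.ne']
  exact sum_pos' (fun j _ => mul_nonneg (hx j) (responsibility_nonneg (hw · |>.le) (hH · j)))
    ⟨j, mem_univ j, mul_pos hxj (div_pos (mul_pos (hw a) hHa) (hden j))⟩

theorem surrogate_eq (v : ι → ℝ) :
    surrogate x H lam w v
      = ∑ j, -(x j) * (log (∑ b, w b * H b j) - ∑ a, responsibility H w a j * log (w a))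
        + ∑ a, ((∑ k, H a k + lam) * v a - (∑ j, x j * responsibility H w a j) * log (v a)) := by
  have hcol (j : κ) :
      -(x j) * (log (∑ b, w b * H b j) + ∑ a, responsibility H w a j * (log (v a) - log (w a)))
          + ∑ a, v a * H a j
        = -(x j) * (log (∑ b, w b * H b j) - ∑ a, responsibility H w a j * log (w a))
          + ∑ a, (v a * H a j - x j * responsibility H w a j * log (v a)) := by
    simp only [mul_sub, mul_add, sum_sub_distrib, mul_sum, neg_mul, sum_neg_distrib, mul_assoc]
    ring
  have hrow (a : ι) :
      (∑ k, H a k + lam) * v a - (∑ j, x j * responsibility H w a j) * log (v a)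
        = ∑ j, (v a * H a j - x j * responsibility H w a j * log (v a)) + lam * v a := by
    simp only [add_mul, sum_mul, sum_sub_distrib, mul_comm (H a _) (v a)]
    ring
  simp only [surrogate, hcol, hrow, sum_add_distrib, mul_sum]
  rw [sum_comm (γ := ι)]
  ring

theorem surrogate_update_le (hx : ∀ j, 0 ≤ x j) (hH : ∀ a j, 0 ≤ H a j) (hw : ∀ a, 0 ≤ w a)
    (hpos : ∀ a, 0 < ∑ k, H a k + lam) {v : ι → ℝ} (hv : ∀ a, 0 < v a) :
    surrogate x H lam w (update x H lam w) ≤ surrogate x H lam w v := by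
  rw [surrogate_eq, surrogate_eq]
  refine add_le_add_right (sum_le_sum fun a _ => ?_) _
  have hcount := sum_mul_responsibility_eq_mul_update (x := x) (w := w) (hpos a).ne'
  have hu : 0 ≤ update x H lam w a := (mul_nonneg_iff_of_pos_left (hpos a)).1 <|
    hcount ▸ sum_nonneg fun j _ => mul_nonneg (hx j) (responsibility_nonneg hw (hH · j))
  have := mul_le_mul_of_nonneg_left (Real.mul_sub_log_le_sub (hv a) hu) (hpos a).le
  rw [hcount]
  linarith

end KLNMF

open Finset in
theorem stmt_11_general {r m : ℕ} (x : Fin m → ℝ) (H : Fin r → Fin m → ℝ) (lam : ℝ)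
    (hx : ∀ j, 0 ≤ x j) (hH : ∀ a j, 0 ≤ H a j)
    (w : Fin r → ℝ) (hw : ∀ a, 0 < w a)
    (hden : ∀ k, 0 < ∑ b, w b * H b k)
    (hpos : ∀ a, (0:ℝ) < ∑ k, H a k + lam)
    (w' : Fin r → ℝ)
    (hw' : ∀ a, w' a = w a * (∑ k, H a k * x k / ∑ b, w b * H b k)
        / (∑ k, H a k + lam)) :
    (∑ j, (-(x j) * Real.log (∑ a, w' a * H a j) + ∑ a, w' a * H a j))
        + lam * ∑ a, w' a
      ≤ (∑ j, (-(x j) * Real.log (∑ a, w a * H a j) + ∑ a, w a * H a j))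
        + lam * ∑ a, w a := by
  obtain rfl : w' = KLNMF.update x H lam w := funext hw'
  calc KLNMF.objective x H lam (KLNMF.update x H lam w)
      ≤ KLNMF.surrogate x H lam w (KLNMF.update x H lam w) :=
        KLNMF.objective_le_surrogate hx hH hw hden fun a j hxj hHaj =>
          KLNMF.update_pos hx hH hw hden (hpos a) hxj hHaj
    _ ≤ KLNMF.surrogate x H lam w w := KLNMF.surrogate_update_le hx hH (hw · |>.le) hpos hw
    _ = KLNMF.objective x H lam w := KLNMF.surrogate_self

open Finset in
theorem stmt_11 {r m : ℕ} (x : Fin m → ℝ) (H : Fin r → Fin m → ℝ) (lam : ℝ)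
    (hx : ∀ j, 0 ≤ x j) (hH : ∀ a j, 0 ≤ H a j) (hlam : 0 ≤ lam)
    (w : Fin r → ℝ) (hw : ∀ a, 0 < w a)
    (hden : ∀ k, 0 < ∑ b, w b * H b k)
    (hpos : ∀ a, (0:ℝ) < ∑ k, H a k + lam)
    (w' : Fin r → ℝ)
    (hw' : ∀ a, w' a = w a * (∑ k, H a k * x k / ∑ b, w b * H b k)
        / (∑ k, H a k + lam)) :
    (∑ j, (-(x j) * Real.log (∑ a, w' a * H a j) + ∑ a, w' a * H a j))
        + lam * ∑ a, w' a
      ≤ (∑ j, (-(x j) * Real.log (∑ a, w a * H a j) + ∑ a, w a * H a j))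
        + lam * ∑ a, w a :=
  stmt_11_general x H lam hx hH w hw hden hpos w' hw'
end

section
/- Let W ∈ ℝ^{n×r} and H ∈ ℝ^{r×m} have nonnegative entries, with strict positivity wherever divisions occur. If W and the update (14) fix W (i.e., W_{ia} = W_{ia} · (Σ_j H_{aj} X_{ij}/(WH)_{ij}) / (Σ_j H_{aj} + λ) for all i, a) and additionally W_{ia} > 0 for all i, a, then W satisfies the KKT conditions W .* ∇_W F = 0 and ∇_W F ≥ 0 for the problem min_{W ≥ 0} F(W) = Σ_{ij}(−X_{ij} log(WH)_{ij} + (WH)_{ij}) + λ Σ_{ij} W_{ij}. -/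
theorem eq_of_eq_mul_div_self {K : Type*} [GroupWithZero K] {w s d : K} (hw : w ≠ 0) (hd : d ≠ 0)
    (h : w = w * s / d) : s = d := by
  rw [eq_div_iff hd] at h
  exact (mul_left_cancel₀ hw h).symm

open Finset in
theorem stmt_19_general {n r m : ℕ} (X : Matrix (Fin n) (Fin m) ℝ)
    (W : Matrix (Fin n) (Fin r) ℝ) (H : Matrix (Fin r) (Fin m) ℝ) (lam : ℝ)
    (hW : ∀ i a, 0 < W i a)
    (hden : ∀ a, (0:ℝ) < ∑ j, H a j + lam)
    (hfix : ∀ i a, W i a = W i a * (∑ j, H a j * X i j / (W * H) i j)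
        / (∑ j, H a j + lam)) :
    ∀ i a,
      (W i a * ((∑ j, H a j) - (∑ j, X i j * H a j / (W * H) i j) + lam) = 0) ∧
      (0 ≤ (∑ j, H a j) - (∑ j, X i j * H a j / (W * H) i j) + lam) := by
  intro i a
  have hratio : ∑ j, X i j * H a j / (W * H) i j = ∑ j, H a j + lam := by
    rw [← eq_of_eq_mul_div_self (hW i a).ne' (hden a).ne' (hfix i a)]
    exact sum_congr rfl fun j _ => by ring
  have hgrad : (∑ j, H a j) - (∑ j, X i j * H a j / (W * H) i j) + lam = 0 := by
    rw [hratio]; ring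
  rw [hgrad]
  exact ⟨mul_zero _, le_rfl⟩

open Finset in
theorem stmt_19 {n r m : ℕ} (X : Matrix (Fin n) (Fin m) ℝ)
    (W : Matrix (Fin n) (Fin r) ℝ) (H : Matrix (Fin r) (Fin m) ℝ) (lam : ℝ)
    (hX : ∀ i j, 0 < X i j) (hH : ∀ a j, 0 ≤ H a j) (hlam : 0 ≤ lam)
    (hW : ∀ i a, 0 < W i a)
    (hWH : ∀ i j, 0 < (W * H) i j)
    (hden : ∀ a, (0:ℝ) < ∑ j, H a j + lam)
    (hfix : ∀ i a, W i a = W i a * (∑ j, H a j * X i j / (W * H) i j)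
        / (∑ j, H a j + lam)) :
    ∀ i a,
      (W i a * ((∑ j, H a j) - (∑ j, X i j * H a j / (W * H) i j) + lam) = 0) ∧
      (0 ≤ (∑ j, H a j) - (∑ j, X i j * H a j / (W * H) i j) + lam) :=
  stmt_19_general X W H lam hW hden hfix
end
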